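/- Let (R, m) be an approximately Gorenstein Noetherian local ring and let {I_t} be a sequence of m-primary irreducible ideals cofinal with the powers of m. Let f : R → M be a homomorphism of finitely generated R-modules. Then f is a split injection if and only if the induced map f ⊗_R R/I_t : R/I_t → M/I_t M is injective for every t. -/

import Mathlib

open Filter IsLocalRing

universe u

section FrobeniusTwist

/-- For a ring `R` of prime characteristic `p`, `FrobTwist R p e` is the ring `R^{1/p^e}` of
`p^e`-th roots of elements of `R`, realized as the ring `R` itself, viewed as an `R`-algebra
via the `e`-th iterate of the Frobenius endomorphism (so `r • x = r^{p^e} * x`). -/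
def FrobTwist (R : Type u) [CommRing R] (p e : ℕ) : Type u := R

variable (R : Type u) [CommRing R] (p : ℕ) [Fact p.Prime] [CharP R p]

instance (e : ℕ) : CommRing (FrobTwist R p e) := inferInstanceAs (CommRing R)

/-- The identity map of `R`, viewed as a map `R → R^{1/p^e}` (sending `r` to `r`,
i.e. to `(r^{p^e})^{1/p^e}`). -/
def FrobTwist.of (e : ℕ) : R →+* FrobTwist R p e := RingHom.id R

instance (e : ℕ) : Module R (FrobTwist R p e) :=
  Module.compHom (FrobTwist R p e) ((FrobTwist.of R p e).comp (iterateFrobenius R p e))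

/-- `R` is `F`-finite: `R^{1/p}` is a finitely generated `R`-module. -/
def FFinite : Prop := Module.Finite R (FrobTwist R p 1)

end FrobeniusTwist

section Summands

variable (R : Type u) [CommRing R]

/-- An `R`-module `M` has no nonzero free direct summand. (For a finitely generated module over a
local ring this is equivalent to the nonexistence of a surjective linear map `M → R`.) -/
def NoFreeSummand (M : Type u) [AddCommGroup M] [Module R M] : Prop :=
  ¬ ∃ f : M →ₗ[R] R, Function.Surjective f

variable (p : ℕ) [Fact p.Prime] [CharP R p]

/-- `a` is the number of `R`-free direct summands in a direct sum decomposition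
`R^{1/p^e} ≅ R^a ⊕ M` where `M` has no nonzero free direct summand. -/
def IsFreeSummandCount (e a : ℕ) : Prop :=
  ∃ (M : Type u) (_ : AddCommGroup M) (_ : Module R M),
    NoFreeSummand R M ∧ Nonempty (FrobTwist R p e ≃ₗ[R] ((Fin a → R) × M))

/-- `R` is strongly `F`-regular: for every `c` not in any minimal prime, the inclusion
`R·c^{1/q} ⊆ R^{1/q}` of `R`-modules splits for all `q = p^e` large. -/
def StronglyFRegular : Prop :=
  ∀ c : R, (∀ P ∈ minimalPrimes R, c ∉ P) →
    ∃ e₀ : ℕ, ∀ e ≥ e₀, ∃ g : FrobTwist R p e →ₗ[R] R, g (FrobTwist.of R p e c) = 1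

end Summands

section CharPInstances

theorem charP_of_ringHom_of_prime {R S : Type*} [CommRing R] [CommRing S] [Nontrivial S]
    (f : R →+* S) (p : ℕ) [hp : Fact p.Prime] [CharP R p] : CharP S p := by
  have hp0 : (p : S) = 0 := by
    rw [← map_natCast f p, CharP.cast_eq_zero R p, map_zero]
  refine ringChar.of_eq (Or.resolve_left ((Nat.dvd_prime hp.1).1 (ringChar.dvd hp0)) fun h1 => ?_)
  haveI := ringChar.of_eq h1
  haveI := CharP.CharOne.subsingleton (R := S)
  exact one_ne_zero (α := S) (Subsingleton.elim _ _)

instance (R : Type u) [CommRing R] [IsLocalRing R] (p : ℕ) [Fact p.Prime] [CharP R p] :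
    CharP (ResidueField R) p :=
  charP_of_ringHom_of_prime (residue R) p

instance (R : Type u) [CommRing R] (P : Ideal R) [P.IsPrime] (p : ℕ) [Fact p.Prime] [CharP R p] :
    CharP (Localization.AtPrime P) p :=
  charP_of_ringHom_of_prime (algebraMap R (Localization.AtPrime P)) p

end CharPInstances




section Length

/-- The length of an `R`-module `M`, as an element of `ℕ∞`: the supremum of lengths of chains
of submodules of `M`. -/
noncomputable def moduleLength (R M : Type*) [Ring R] [AddCommGroup M] [Module R M] : ℕ∞ :=
  WithBot.unbotD 0 (Order.krullDim (Submodule R M))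

end Length

section FrobPow

/-- The `q = p^e`-th Frobenius power `I^{[q]}` of an ideal `I`: the ideal generated by the
`p^e`-th powers of the elements of `I`. -/
def Ideal.frobPow {R : Type*} [CommRing R] (p e : ℕ) (I : Ideal R) : Ideal R :=
  Ideal.span ((· ^ p ^ e) '' (I : Set R))

end FrobPow

section Excellent

/-- An ideal is irreducible if it is not the intersection of two ideals strictly containing it;
equivalently, whenever it is written as an intersection of two ideals, it equals one of them. -/
def IsIrreducibleIdeal {A : Type*} [CommRing A] (I : Ideal A) : Prop :=
  ∀ J K : Ideal A, I = J ⊓ K → I = J ∨ I = K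

/-- A ring is catenary if any two saturated chains of prime ideals with the same endpoints
have the same length. -/
def Ring.IsCatenary (A : Type*) [CommRing A] : Prop :=
  ∀ c₁ c₂ : LTSeries (PrimeSpectrum A), c₁.head = c₂.head → c₁.last = c₂.last →
    (∀ i : Fin c₁.length, c₁.toFun i.castSucc ⋖ c₁.toFun i.succ) →
    (∀ i : Fin c₂.length, c₂.toFun i.castSucc ⋖ c₂.toFun i.succ) →
    c₁.length = c₂.length

/-- A (commutative, Noetherian) ring is regular local if it is a Noetherian local ring whose
maximal ideal (= the ideal of nonunits) is generated by `dim A` elements. -/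
def IsRegularLocalRing' (A : Type u) [CommRing A] : Prop :=
  IsNoetherianRing A ∧
    ∃ s : Finset A, (∀ x : A, x ∈ Ideal.span (s : Set A) ↔ x ∈ nonunits A) ∧
      (s.card : WithBot ℕ∞) = ringKrullDim A

/-- A ring is regular if it is Noetherian and all its localizations at primes are regular local
rings. -/
def IsRegularRing' (A : Type u) [CommRing A] : Prop :=
  IsNoetherianRing A ∧
    ∀ P : PrimeSpectrum A, IsRegularLocalRing' (Localization.AtPrime P.asIdeal)

/-- An algebra `A` over a field `k` is geometrically regular if `L ⊗[k] A` is a regular ring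
for every finite field extension `L` of `k`. -/
def Algebra.IsGeometricallyRegular (k A : Type u) [Field k] [CommRing A] [Algebra k A] : Prop :=
  ∀ (L : Type u) [Field L] [Algebra k L], Module.Finite k L →
    IsRegularRing' (TensorProduct k L A)

/-- The residue field `k(P)` of a prime `P`. -/
noncomputable abbrev primeResidueField {R : Type u} [CommRing R] (P : Ideal R) [P.IsPrime] :
    Type u :=
  ResidueField (Localization.AtPrime P)

/-- A Noetherian local ring is excellent if it is universally catenary, its formal fibers (the
fibers of the map to its completion) are geometrically regular, and every finitely generated
algebra over it has open regular locus (the J-2 condition). -/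
def IsExcellentLocalRing (R : Type u) [CommRing R] [IsLocalRing R] : Prop :=
  IsNoetherianRing R ∧
  (∀ (B : Type u) [CommRing B] [Algebra R B], Algebra.FiniteType R B → Ring.IsCatenary B) ∧
  (∀ (P : Ideal R) (hP : P.IsPrime),
    Algebra.IsGeometricallyRegular (primeResidueField P)
      (TensorProduct R (primeResidueField P) (AdicCompletion (maximalIdeal R) R))) ∧
  (∀ (B : Type u) [CommRing B] [Algebra R B], Algebra.FiniteType R B →
    IsOpen {Q : PrimeSpectrum B | IsRegularLocalRing' (Localization.AtPrime Q.asIdeal)})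

end Excellent

section CM

/-- A local ring is Cohen–Macaulay if some system of parameters (a family of `dim R` elements
generating an ideal whose radical is the maximal ideal) is a regular sequence. -/
def IsCohenMacaulayLocalRing (A : Type u) [CommRing A] [IsLocalRing A] : Prop :=
  ∃ xs : List A, RingTheory.Sequence.IsRegular A xs ∧
    (Ideal.ofList xs).radical = maximalIdeal A ∧
    (xs.length : WithBot ℕ∞) = ringKrullDim A

/-- A local ring is Gorenstein if it is Cohen–Macaulay and some system of parameters generates
an irreducible ideal. -/
def IsGorensteinLocalRing (A : Type u) [CommRing A] [IsLocalRing A] : Prop :=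
  ∃ xs : List A, RingTheory.Sequence.IsRegular A xs ∧
    (Ideal.ofList xs).radical = maximalIdeal A ∧
    (xs.length : WithBot ℕ∞) = ringKrullDim A ∧
    IsIrreducibleIdeal (Ideal.ofList xs)

/-- A Noetherian local ring is approximately Gorenstein if there is a sequence of `m`-primary
irreducible ideals cofinal with the powers of the maximal ideal. -/
def IsApproximatelyGorenstein (R : Type u) [CommRing R] [IsLocalRing R] : Prop :=
  ∃ I : ℕ → Ideal R,
    (∀ t, (I t).radical = maximalIdeal R ∧ IsIrreducibleIdeal (I t)) ∧
    ∀ n : ℕ, ∃ t₀, ∀ t ≥ t₀, I t ≤ maximalIdeal R ^ n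

end CM

section TightClosure

/-- `x` lies in the tight closure of the ideal `I`: there is `c` not in any minimal prime with
`c x^q ∈ I^{[q]}` for all large `q = p^e`. -/
def Ideal.memTightClosure {R : Type u} [CommRing R] (p : ℕ) (I : Ideal R) (x : R) : Prop :=
  ∃ c : R, (∀ P ∈ minimalPrimes R, c ∉ P) ∧
    ∃ e₀ : ℕ, ∀ e ≥ e₀, c * x ^ p ^ e ∈ I.frobPow p e

/-- `R` is weakly `F`-regular: every ideal is tightly closed. -/
def WeaklyFRegular (R : Type u) [CommRing R] (p : ℕ) : Prop :=
  ∀ (I : Ideal R) (x : R), I.memTightClosure p x → x ∈ I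

end TightClosure

section Hull

/-- `ι : K →ₗ[R] E` exhibits `E` as an injective hull of `K`: `E` is injective and `ι` is an
injective map with essential image. -/
def IsInjectiveHull (R : Type u) [CommRing R] {K E : Type u}
    [AddCommGroup K] [Module R K] [AddCommGroup E] [Module R E] (ι : K →ₗ[R] E) : Prop :=
  Module.Injective R E ∧ Function.Injective ι ∧
    ∀ N : Submodule R E, N ≠ ⊥ → N ⊓ LinearMap.range ι ≠ ⊥

end Hull


section PDegree

/-- The degree `[k : k^p]` of the residue field of a local ring `R` over its subfield of `p`-th
powers, computed as the rank of `k^{1/p}` over `k`;  `α(R) = log_p [k : k^p]`. -/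
noncomputable def residueFieldPDegree (R : Type u) [CommRing R] [IsLocalRing R] (p : ℕ)
    [Fact p.Prime] [CharP R p] : ℕ :=
  Module.finrank (ResidueField R) (FrobTwist (ResidueField R) p 1)

end PDegree

/-! Modulo an irreducible `m`-primary ideal `I`, the Artinian ring `A = R/I` has irreducible zero
ideal, so any two nonzero ideals of `A` meet and every simple module has at most a one-dimensional
space of maps to `A`. Counting lengths then gives `ℓ(Hom(N, A)) ≤ ℓ(N)`, which forces every map
from an ideal of `A` to `A` to extend: `A` is self-injective by Baer's criterion. Hence injectivity
of `R/I → M/IM` yields `h : M → R/I` with `h ∘ f` the projection. By Artin–Rees, applied to the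
values on the relations of a presentation of `M`, once `I ⊆ m^(c+1)` such an `h` lifts modulo `m`
to some `g : M → R`; then `g (f 1)` is a unit and `(g (f 1))⁻¹ • g` splits `f`. -/

open Module Submodule LinearMap

section HomLength

variable {R : Type*} [CommRing R] {E : Type*} [AddCommGroup E] [Module R E]

theorem mem_span_singleton_of_isSimpleModule
    (hE : ∀ P Q : Submodule R E, P ⊓ Q = ⊥ → P = ⊥ ∨ Q = ⊥)
    {S : Type*} [AddCommGroup S] [Module R S] [IsSimpleModule R S]
    (φ : S →ₗ[R] E) {ψ : S →ₗ[R] E} (hψ : ψ ≠ 0) : φ ∈ R ∙ ψ := by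
  by_cases hφ : φ = 0
  · simp [hφ]
  have hle : range φ ≤ range ψ := by
    have htop : comap φ (range ψ) = ⊤ := by
      refine (eq_bot_or_eq_top _).resolve_left fun hbot => ?_
      have : range φ ⊓ range ψ = ⊥ := by rw [← map_comap_eq, hbot, Submodule.map_bot]
      rcases hE _ _ this with h | h
      · exact hφ (range_eq_bot.1 h)
      · exact hψ (range_eq_bot.1 h)
    rw [range_eq_map, ← htop]
    exact map_comap_le _ _
  have := IsSimpleModule.nontrivial R S
  obtain ⟨s, hs⟩ := exists_ne (0 : S)
  obtain ⟨t, ht⟩ := hle (mem_range_self φ s)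
  obtain ⟨r, rfl⟩ := mem_span_singleton.1 (IsSimpleModule.span_singleton_eq_top R hs ▸ mem_top :
    t ∈ R ∙ s)
  refine mem_span_singleton.2 ⟨r, ext_on (IsSimpleModule.span_singleton_eq_top R hs) ?_⟩
  rintro _ rfl
  simpa using ht

theorem length_linearMap_le_one (hE : ∀ P Q : Submodule R E, P ⊓ Q = ⊥ → P = ⊥ ∨ Q = ⊥)
    (S : Type*) [AddCommGroup S] [Module R S] [IsSimpleModule R S] :
    length R (S →ₗ[R] E) ≤ 1 := by
  rcases subsingleton_or_nontrivial (S →ₗ[R] E) with h | h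
  · simp [length_eq_zero]
  have : IsSimpleOrder (Submodule R (S →ₗ[R] E)) :=
    { eq_bot_or_eq_top := fun N => or_iff_not_imp_left.2 fun hN => eq_top_iff.2 fun φ _ => by
        obtain ⟨ψ, hψN, hψ⟩ := N.ne_bot_iff.1 hN
        exact span_le.2 (Set.singleton_subset_iff.2 hψN)
          (mem_span_singleton_of_isSimpleModule hE φ hψ) }
  have : IsSimpleModule R (S →ₗ[R] E) := ⟨⟩
  simp

theorem length_linearMap_eq_add {M : Type*} [AddCommGroup M] [Module R M] (N : Submodule R M) :
    length R (M →ₗ[R] E) =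
      length R ((M ⧸ N) →ₗ[R] E) + length R (range (lcomp R E N.subtype)) :=
  length_eq_add_of_exact _ _ (lcomp_injective_of_surjective _ N.mkQ_surjective)
    (lcomp R E N.subtype).surjective_rangeRestrict
    (exact_iff.2 ((ker_rangeRestrict _).trans (exact_iff.1
      (exact_lcomp_of_exact_of_surjective E (exact_subtype_mkQ N) N.mkQ_surjective))))

theorem length_linearMap_le (hE : ∀ P Q : Submodule R E, P ⊓ Q = ⊥ → P = ⊥ ∨ Q = ⊥)
    (M : Type*) [AddCommGroup M] [Module R M] : length R (M →ₗ[R] E) ≤ length R M := by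
  by_cases hM : IsFiniteLength R M
  swap
  · rw [← length_ne_top_iff, not_not] at hM
    simp [hM]
  induction hM with
  | of_subsingleton => simp [length_eq_zero]
  | @of_simple_quotient M _ _ N _ _ ih =>
    calc length R (M →ₗ[R] E)
        = length R ((M ⧸ N) →ₗ[R] E) + length R (range (lcomp R E N.subtype)) :=
          length_linearMap_eq_add N
      _ ≤ length R N + 1 := by
          rw [add_comm]
          gcongr
          · exact (length_le_of_injective _ (range _).injective_subtype).trans ih
          · exact length_linearMap_le_one hE _
      _ = length R M := by
          rw [length_eq_add_of_exact N.subtype N.mkQ N.injective_subtype N.mkQ_surjective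
            (exact_subtype_mkQ N), length_eq_one R (M ⧸ N)]

end HomLength

theorem Submodule.eq_top_of_length_le {R M : Type*} [Ring R] [AddCommGroup M] [Module R M]
    {N : Submodule R M} (hM : length R M ≠ ⊤) (h : length R M ≤ length R N) : N = ⊤ := by
  obtain ⟨_, _⟩ := isFiniteLength_iff_isNoetherian_isArtinian.1 (length_ne_top_iff.1 hM)
  by_contra hN
  exact (Submodule.length_lt hN).not_ge h

section SelfInjective

variable {A : Type*} [CommRing A] [IsArtinianRing A]

theorem lcomp_subtype_surjective_of_irreducible_bot
    (hA : ∀ J K : Ideal A, J ⊓ K = ⊥ → J = ⊥ ∨ K = ⊥) (J : Ideal A) :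
    Function.Surjective (lcomp A A J.subtype) := by
  -- `ℓ(range) = ℓ(Hom(A, A)) - ℓ(Hom(A ⧸ J, A)) ≥ ℓ(A) - ℓ(A ⧸ J) = ℓ(J) ≥ ℓ(Hom(J, A))`
  have hfin : length A A ≠ ⊤ := length_ne_top
  have hJ : length A A = length A J + length A (A ⧸ J) :=
    length_eq_add_of_exact J.subtype J.mkQ J.injective_subtype J.mkQ_surjective
      (exact_subtype_mkQ J)
  have hres : length A J + length A (A ⧸ J) ≤
      length A (range (lcomp A A J.subtype)) + length A (A ⧸ J) := by
    rw [← hJ, ← (ringLmapEquivSelf A A A).length_eq, length_linearMap_eq_add J, add_comm]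
    gcongr
    exact length_linearMap_le hA _
  have hQ : length A (A ⧸ J) ≠ ⊤ := ne_top_of_le_ne_top hfin (by rw [hJ]; exact le_add_self)
  have hJA : length A (J →ₗ[A] A) ≤ length A J := length_linearMap_le hA _
  rw [← range_eq_top]
  refine eq_top_of_length_le (ne_top_of_le_ne_top ?_ hJA) ?_
  · exact ne_top_of_le_ne_top hfin (by rw [hJ]; exact le_self_add)
  · exact hJA.trans ((WithTop.add_le_add_iff_right hQ).1 hres)

theorem Module.injective_self_of_irreducible_bot
    (hA : ∀ J K : Ideal A, J ⊓ K = ⊥ → J = ⊥ ∨ K = ⊥) : Module.Injective A A :=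
  Module.Baer.injective fun J g => by
    obtain ⟨g', hg'⟩ := lcomp_subtype_surjective_of_irreducible_bot hA J g
    exact ⟨g', fun x hx => LinearMap.congr_fun hg' ⟨x, hx⟩⟩

end SelfInjective

section ArtinRees

variable {R : Type*} [CommRing R]

theorem Submodule.apply_mem_of_mem_smul_top {P : Type*} [AddCommGroup P] [Module R P]
    {J : Ideal R} (u : P →ₗ[R] R) {p : P} (hp : p ∈ J • (⊤ : Submodule R P)) : u p ∈ J :=
  (smul_le.2 fun r hr q _ => by simpa using J.mul_mem_right (u q) hr :
    J • ⊤ ≤ Submodule.comap u J) hp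

theorem Submodule.pi_mem_smul_top {ι : Type*} [Fintype ι] {J : Ideal R} {v : ι → R}
    (hv : ∀ i, v i ∈ J) : v ∈ J • (⊤ : Submodule R (ι → R)) := by
  classical
  rw [pi_eq_sum_univ v]
  exact sum_mem fun i _ => smul_mem_smul (hv i) mem_top

theorem exists_lift_of_le_pow [IsNoetherianRing R] (𝔞 : Ideal R) (M : Type*) [AddCommGroup M]
    [Module R M] [Module.Finite R M] :
    ∃ c : ℕ, ∀ (n : ℕ) (I : Ideal R), I ≤ 𝔞 ^ (c + n) → ∀ h : M →ₗ[R] R ⧸ I,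
      ∃ g : M →ₗ[R] R, ∀ x y, h x = Ideal.Quotient.mk I y → y - g x ∈ 𝔞 ^ n := by
  obtain ⟨k, e, he⟩ := Module.Finite.exists_fin' R M
  obtain ⟨s, κ, hκ⟩ :=
    Submodule.fg_iff_exists_fin_generating_family.1 (IsNoetherian.noetherian (ker e))
  -- `ρ θ` lists the values of `θ` on the relations `κ` of `M`; `θ` descends to `M` iff `ρ θ = 0`
  let ρ : ((Fin k → R) →ₗ[R] R) →ₗ[R] Fin s → R := LinearMap.pi fun j => applyₗ (κ j)
  obtain ⟨c, hc⟩ := Ideal.exists_pow_inf_eq_pow_smul 𝔞 (range ρ)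
  refine ⟨c, fun n I hI h => ?_⟩
  obtain ⟨θ, hθ⟩ := Module.projective_lifting_property (Ideal.Quotient.mkₐ R I).toLinearMap
    (h ∘ₗ e) Ideal.Quotient.mk_surjective
  have hθI : ∀ v, Ideal.Quotient.mk I (θ v) = h (e v) := LinearMap.congr_fun hθ
  have hρθ : ρ θ ∈ 𝔞 ^ (c + n) • (⊤ : Submodule R (Fin s → R)) ⊓ range ρ := by
    refine ⟨pi_mem_smul_top fun j => hI ?_, mem_range_self ρ θ⟩
    have hj : e (κ j) = 0 := by rw [← LinearMap.mem_ker, ← hκ]; exact subset_span ⟨j, rfl⟩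
    rw [show ρ θ j = θ (κ j) from rfl, ← Ideal.Quotient.eq_zero_iff_mem, hθI, hj, map_zero]
  rw [hc _ le_self_add, add_tsub_cancel_left] at hρθ
  obtain ⟨θ', hθ', hρθ'⟩ : ρ θ ∈ map ρ (𝔞 ^ n • ⊤) := by
    rw [map_smul'', ← range_eq_map]
    exact smul_mono_right (𝔞 ^ n) (inf_le_right : _ ⊓ range ρ ≤ _) hρθ
  obtain ⟨g, hg⟩ : θ - θ' ∈ range (lcomp R R e) := by
    have hexact : Function.Exact (Fintype.linearCombination R κ) e := by
      rw [exact_iff, Fintype.range_linearCombination, hκ]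
    refine (exact_lcomp_of_exact_of_surjective R hexact he (θ - θ')).1 (pi_ext fun j r => ?_)
    have hj : θ' (κ j) = θ (κ j) := congrFun hρθ' j
    simp [hj]
  refine ⟨g, fun x y hxy => ?_⟩
  obtain ⟨v, rfl⟩ := he x
  have hg' : g (e v) = θ v - θ' v := LinearMap.congr_fun hg v
  have hθy : y - θ v ∈ I := Ideal.Quotient.eq.1 (hxy ▸ hθI v).symm
  rw [hg', sub_sub_eq_add_sub, add_sub_right_comm]
  exact add_mem ((hI.trans (Ideal.pow_le_pow_right le_add_self)) hθy)
    (apply_mem_of_mem_smul_top (applyₗ v) hθ')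

end ArtinRees

section Quotient

variable {R : Type*} [CommRing R]

theorem exists_comp_eq_mk_of_injective (I : Ideal R) [Module.Injective (R ⧸ I) (R ⧸ I)]
    {M : Type*} [AddCommGroup M] [Module R M] (f : R →ₗ[R] M)
    (hf : ∀ x, f x ∈ I • (⊤ : Submodule R M) → x ∈ I) :
    ∃ h : M →ₗ[R] R ⧸ I, ∀ x, h (f x) = Ideal.Quotient.mk I x := by
  let Q := I • (⊤ : Submodule R M)
  let ι : (R ⧸ I) →ₗ[R ⧸ I] M ⧸ Q := toSpanSingleton (R ⧸ I) _ (Q.mkQ (f 1))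
  have hι : ∀ x, ι (Ideal.Quotient.mk I x) = Q.mkQ (f x) := fun x => by
    change Ideal.Quotient.mk I x • Q.mkQ (f 1) = Q.mkQ (f x)
    rw [mkQ_apply, mkQ_apply, Module.Quotient.mk_smul_mk, ← map_smul, smul_eq_mul, mul_one]
  have hιinj : Function.Injective ι := by
    refine (injective_iff_map_eq_zero ι).2 fun a ha => ?_
    obtain ⟨x, rfl⟩ := Ideal.Quotient.mk_surjective a
    rw [hι, mkQ_apply, Quotient.mk_eq_zero] at ha
    exact Ideal.Quotient.eq_zero_iff_mem.2 (hf x ha)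
  obtain ⟨h, hh⟩ := Module.Injective.extension_property (R ⧸ I) (R ⧸ I) _ _ ι hιinj LinearMap.id
  exact ⟨h.restrictScalars R ∘ₗ Q.mkQ, fun x => by
    simpa [hι] using LinearMap.congr_fun hh (Ideal.Quotient.mk I x)⟩

theorem IsIrreducibleIdeal.eq_bot_or_eq_bot_of_inf_eq_bot {I : Ideal R} (hI : IsIrreducibleIdeal I)
    (J K : Ideal (R ⧸ I)) (hJK : J ⊓ K = ⊥) : J = ⊥ ∨ K = ⊥ := by
  have hI' : I = J.comap (Ideal.Quotient.mk I) ⊓ K.comap (Ideal.Quotient.mk I) := by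
    rw [← Ideal.comap_inf, hJK, ← RingHom.ker_eq_comap_bot, Ideal.mk_ker]
  have hmap : ∀ L : Ideal (R ⧸ I), I = L.comap (Ideal.Quotient.mk I) → L = ⊥ := fun L hL => by
    rw [← Ideal.map_comap_of_surjective _ Ideal.Quotient.mk_surjective L, ← hL,
      Ideal.map_quotient_self]
  exact (hI _ _ hI').imp (hmap J) (hmap K)

theorem isArtinianRing_quotient_of_radical_eq [IsNoetherianRing R] [IsLocalRing R] {I : Ideal R}
    (hI : I.radical = IsLocalRing.maximalIdeal R) : IsArtinianRing (R ⧸ I) :=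
  IsLocalRing.quotient_artinian_of_mem_minimalPrimes_of_isLocalRing I <| by
    rw [← Ideal.radical_minimalPrimes, hI, Ideal.minimalPrimes_eq_subsingleton_self]
    rfl

end Quotient

theorem split_iff_injective_mod_irreducible_general
    (R : Type u) [CommRing R] [IsLocalRing R] [IsNoetherianRing R]
    (I : ℕ → Ideal R)
    (hprim : ∀ t, (I t).radical = maximalIdeal R)
    (hirr : ∀ t, IsIrreducibleIdeal (I t))
    (hcof : ∀ n : ℕ, ∃ t₀, ∀ t ≥ t₀, I t ≤ maximalIdeal R ^ n)
    (M : Type u) [AddCommGroup M] [Module R M] [Module.Finite R M]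
    (f : R →ₗ[R] M) :
    (∃ g : M →ₗ[R] R, g.comp f = LinearMap.id) ↔
      ∀ t, ∀ x : R, f x ∈ I t • (⊤ : Submodule R M) → x ∈ I t := by
  refine ⟨fun ⟨g, hg⟩ t x hx => ?_, fun hf => ?_⟩
  · simpa [← LinearMap.comp_apply, hg] using apply_mem_of_mem_smul_top g hx
  obtain ⟨c, hc⟩ := exists_lift_of_le_pow (maximalIdeal R) M
  obtain ⟨t, ht⟩ := hcof (c + 1)
  have := isArtinianRing_quotient_of_radical_eq (hprim t)
  have := Module.injective_self_of_irreducible_bot (hirr t).eq_bot_or_eq_bot_of_inf_eq_bot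
  obtain ⟨h, hh⟩ := exists_comp_eq_mk_of_injective (I t) f (hf t)
  obtain ⟨g, hg⟩ := hc 1 (I t) (ht t le_rfl) h
  have hu : IsUnit (g (f 1)) := isUnit_of_mem_nonunits_one_sub_self _ <|
    (mem_maximalIdeal _).1 (pow_one (maximalIdeal R) ▸ hg (f 1) 1 (hh 1))
  exact ⟨hu.unit⁻¹ • g, LinearMap.ext_ring (by simp [Units.smul_def])⟩

/-- **Hochster.**  Let `(R, m)` be an approximately Gorenstein Noetherian local ring with a
sequence `{I_t}` of `m`-primary irreducible ideals cofinal with the powers of `m`, and let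
`f : R → M` be a homomorphism of finitely generated `R`-modules.  Then `f` is a split injection
if and only if `f ⊗ R/I_t : R/I_t → M/I_t M` is injective for every `t`. -/
theorem split_iff_injective_mod_irreducible
    (R : Type u) [CommRing R] [IsLocalRing R] [IsNoetherianRing R]
    (hAG : IsApproximatelyGorenstein R)
    (I : ℕ → Ideal R)
    (hprim : ∀ t, (I t).radical = maximalIdeal R)
    (hirr : ∀ t, IsIrreducibleIdeal (I t))
    (hcof : ∀ n : ℕ, ∃ t₀, ∀ t ≥ t₀, I t ≤ maximalIdeal R ^ n)
    (M : Type u) [AddCommGroup M] [Module R M] [Module.Finite R M]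
    (f : R →ₗ[R] M) :
    (∃ g : M →ₗ[R] R, g.comp f = LinearMap.id) ↔
      ∀ t, ∀ x : R, f x ∈ I t • (⊤ : Submodule R M) → x ∈ I t :=
  split_iff_injective_mod_irreducible_general R I hprim hirr hcof M f
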